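/- Let F be a field, let r, m be natural numbers with 1 ≤ r ≤ m, let c₀, …, c_{r−1} be pairwise distinct elements of F, and fix any 'secret' vector (s₀, …, s_{m−r−1}) ∈ F^{m−r}. Define, for b = (b₀, …, b_{r−1}) ∈ F^r, the polynomial f_b(x) = Σ_{j<r} b_j x^j + Σ_{j<m−r} s_j x^{r+j}. Then the map F^r → F^r sending b to (f_b(c₀), …, f_b(c_{r−1})) is a bijection. Hence any r shares of the ramp scheme can be produced, for every possible secret, by exactly one choice of the random low coefficients. -/

import Mathlib

/-! The share vector is the Vandermonde matrix of the points applied to the low coefficients,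
translated by the fixed contribution of the secret; distinct points make the Vandermonde
determinant nonzero, so both steps are bijections. -/

open Matrix

theorem Matrix.vandermonde_mulVec_apply {R : Type*} [CommRing R] {n : ℕ} (v b : Fin n → R)
    (i : Fin n) : (vandermonde v *ᵥ b) i = ∑ j : Fin n, b j * v i ^ (j : ℕ) := by
  simp only [mulVec, dotProduct, vandermonde_apply, mul_comm]

theorem Matrix.vandermonde_mulVec_bijective {K : Type*} [Field K] {n : ℕ} {v : Fin n → K}
    (hv : Function.Injective v) : Function.Bijective (vandermonde v).mulVec := by
  have hunit : IsUnit (vandermonde v) :=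
    (isUnit_iff_isUnit_det _).2 (det_vandermonde_ne_zero_iff.2 hv).isUnit
  exact ⟨mulVec_injective_iff_isUnit.2 hunit, mulVec_surjective_iff_isUnit.2 hunit⟩

theorem low_coeffs_to_shares_bijective_general
    {F : Type*} [Field F] (r m : ℕ)
    (c : Fin r → F) (hc : Function.Injective c)
    (s : Fin (m - r) → F) :
    Function.Bijective
      (fun b : Fin r → F => fun i : Fin r =>
        (∑ j : Fin r, b j * c i ^ (j : ℕ)) +
          ∑ j : Fin (m - r), s j * c i ^ (r + (j : ℕ))) := by
  let secretPart : Fin r → F := fun i => ∑ j : Fin (m - r), s j * c i ^ (r + (j : ℕ))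
  have hshares : (fun b : Fin r → F => fun i : Fin r =>
        (∑ j : Fin r, b j * c i ^ (j : ℕ)) +
          ∑ j : Fin (m - r), s j * c i ^ (r + (j : ℕ)))
      = fun b => vandermonde c *ᵥ b + secretPart := by
    funext b i
    simp only [Pi.add_apply, vandermonde_mulVec_apply, secretPart]
  rw [hshares]
  exact (AddGroup.addRight_bijective secretPart).comp (vandermonde_mulVec_bijective hc)

/-- Ramp-scheme privacy core: over a field `F`, with `1 ≤ r ≤ m`, pairwise
distinct points `c₀, …, c_{r−1}` and a fixed secret `(s₀, …, s_{m−r−1})`, the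
map sending the random low coefficients `b ∈ F^r` to the `r` shares
`(f_b(c₀), …, f_b(c_{r−1}))`, where
`f_b(x) = Σ_{j<r} b_j x^j + Σ_{j<m−r} s_j x^{r+j}`, is a bijection. -/
theorem low_coeffs_to_shares_bijective
    {F : Type*} [Field F] (r m : ℕ) (hr : 1 ≤ r) (hrm : r ≤ m)
    (c : Fin r → F) (hc : Function.Injective c)
    (s : Fin (m - r) → F) :
    Function.Bijective
      (fun b : Fin r → F => fun i : Fin r =>
        (∑ j : Fin r, b j * c i ^ (j : ℕ)) +
          ∑ j : Fin (m - r), s j * c i ^ (r + (j : ℕ))) :=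
  low_coeffs_to_shares_bijective_general r m c hc s
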